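/- Let X be a concrete product system over a unital subsemigroup P of a group G, and let λ be its Fock representation on the Fock module FX = ⊕_{r∈P} X_r. For p_i, q_i ∈ P, ε, ε' ∈ {0,1}, ξ_{p_i} ∈ X_{p_i}, ξ_{q_i} ∈ X_{q_i}, and any r ∈ P, ξ_r ∈ X_r: the operator (λ_{p_1}(ξ_{p_1})*)^ε λ_{q_1}(ξ_{q_1}) ⋯ λ_{p_n}(ξ_{p_n})* λ_{q_n}(ξ_{q_n})^{ε'} applied to ξ_r equals (ξ_{p_1}*)^ε ξ_{q_1} ⋯ ξ_{p_n}* ξ_{q_n}^{ε'} ξ_r if r ∈ q_n^{-ε'} p_n ⋯ q_1⁻¹ p_1^ε P, and equals 0 otherwise. -/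

import Mathlib

open scoped Classical

/-- The constructible set `qₙ^{-ε'} pₙ ⋯ q₁⁻¹ p₁^{ε} Z`. -/
def psWord {M : Type*} [Monoid M] (ε ε' : Bool) (L : List (M × M)) (Z : Set M) : Set M :=
  match L with
  | [] => Z
  | (p, q) :: rest =>
    let Z0 : Set M := if ε then (p * ·) '' Z else Z
    let Z1 : Set M := (((p, q) :: rest).zip rest).foldl
      (fun W x => (x.2.1 * ·) '' ((x.1.2 * ·) ⁻¹' W)) Z0
    if ε' then ((((p, q) :: rest).getLast (List.cons_ne_nil _ _)).2 * ·) ⁻¹' Z1 else Z1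

/-- The product `F₁(e₁)^{ε} F₂(e₁) ⋯ F₁(eₙ) F₂(eₙ)^{ε'}` in a monoid. -/
def genProd {α R : Type*} [Monoid R] (ε ε' : Bool) (F₁ F₂ : α → R) (E : List α) : R :=
  (((List.range E.length).zip E).map (fun ie =>
    (if ie.1 = 0 ∧ ε = false then 1 else F₁ ie.2) *
    (if ie.1 = E.length - 1 ∧ ε' = false then 1 else F₂ ie.2))).prod

/-- The vector of the algebraic Fock module supported at the component `r` with value `ξ`. -/
noncomputable def fockSingle {M R : Type*} [Zero R] (r : M) (ξ : R) : M → R :=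
  fun s => if s = r then ξ else 0

/-- The left creation operator `λ_p(ξ)` on the algebraic Fock module:
`(λ_p(ξ) f)_{pu} = ξ · f_u` and `(λ_p(ξ) f)_s = 0` if `s ∉ pP`. -/
noncomputable def fockLam {M R : Type*} [Monoid M] [Mul R] [Zero R]
    (p : M) (ξ : R) : Function.End (M → R) :=
  fun f s => if h : ∃ u : M, p * u = s then ξ * f h.choose else 0

/-- The adjoint `λ_p(ξ)*` of the left creation operator on the algebraic Fock module:
`(λ_p(ξ)* f)_s = ξ* · f_{ps}`. -/
noncomputable def fockLamStar {M R : Type*} [Monoid M] [Mul R] [Star R]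
    (p : M) (ξ : R) : Function.End (M → R) :=
  fun f s => star ξ * f (p * s)

/-! ### Auxiliary lemmas -/

lemma genProd_nil {α R : Type*} [Monoid R] (ε ε' : Bool) (F₁ F₂ : α → R) :
    genProd ε ε' F₁ F₂ [] = 1 := rfl

lemma genProd_singleton {α R : Type*} [Monoid R] (ε ε' : Bool) (F₁ F₂ : α → R) (e : α) :
    genProd ε ε' F₁ F₂ [e] = (if ε then F₁ e else 1) * (if ε' then F₂ e else 1) := by
  unfold genProd
  cases ε <;> cases ε' <;> simp

lemma genProd_concat {α R : Type*} [Monoid R] (ε ε' : Bool) (F₁ F₂ : α → R) (E : List α)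
    (e : α) (h : E ≠ [] ∨ ε = true) :
    genProd ε ε' F₁ F₂ (E ++ [e]) =
      genProd ε true F₁ F₂ E * (F₁ e * if ε' then F₂ e else 1) := by
  unfold genProd
  rw [show (List.range (E ++ [e]).length).zip (E ++ [e])
      = (List.range E.length).zip E ++ [(E.length, e)] from by
      rw [List.length_append, List.length_singleton, List.range_succ,
        List.zip_append (by simp)]
      rfl,
    List.map_append, List.prod_append]
  congr 1
  · apply congrArg
    apply List.map_congr_left
    rintro ⟨i, x⟩ hx
    have hi : i < E.length := List.mem_range.mp (List.of_mem_zip hx).1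
    have h1 : ¬ (i = (E ++ [e]).length - 1 ∧ ε' = false) := by
      simp only [List.length_append, List.length_singleton]
      rintro ⟨h', -⟩; omega
    have h2 : ¬ (i = E.length - 1 ∧ (true : Bool) = false) := by simp
    rw [if_neg h1, if_neg h2]
  · have h1 : ¬ (E.length = 0 ∧ ε = false) := by
      rcases h with h | h
      · rintro ⟨h', -⟩; exact h (List.length_eq_zero_iff.mp h')
      · simp [h]
    have h2 : (E.length = (E ++ [e]).length - 1) := by simp
    simp only [List.map_singleton, List.prod_singleton, if_neg h1]
    cases ε'
    · rw [if_pos ⟨h2, rfl⟩, if_neg Bool.false_ne_true, mul_one]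
    · rw [if_neg (by simp), if_pos rfl]

lemma zip_tail_concat {α : Type*} : ∀ (L : List α) (h : L ≠ []) (a : α),
    (L ++ [a]).zip (L ++ [a]).tail = L.zip L.tail ++ [(L.getLast h, a)] := by
  intro L
  induction L with
  | nil => simp
  | cons b L' ih =>
    intro _ a
    cases L' with
    | nil => simp
    | cons c L'' =>
      have := ih (by simp) a
      simp only [List.cons_append, List.tail_cons, List.zip_cons_cons] at this ⊢
      rw [this]
      simp [List.getLast_cons]

lemma psWord_singleton {M : Type*} [Monoid M] (ε ε' : Bool) (a : M × M) (Z : Set M) :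
    psWord ε ε' [a] Z =
      (if ε' then ((a.2 * ·) ⁻¹' ·) else id) (if ε then (a.1 * ·) '' Z else Z) := by
  obtain ⟨p, q⟩ := a
  cases ε' <;> simp [psWord]

lemma psWord_concat {M : Type*} [Monoid M] (ε ε' : Bool) (L : List (M × M)) (a : M × M)
    (Z : Set M) (h : L ≠ [] ∨ ε = true) :
    psWord ε ε' (L ++ [a]) Z =
      (if ε' then ((a.2 * ·) ⁻¹' ·) else id) ((a.1 * ·) '' psWord ε true L Z) := by
  match L, h with
  | [], h =>
    rw [List.nil_append, psWord_singleton]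
    rcases h with h | h
    · exact absurd rfl h
    · subst h
      simp [psWord]
  | (p₁, q₁) :: rest, h =>
    show psWord ε ε' ((p₁, q₁) :: (rest ++ [a])) Z = _
    simp only [psWord]
    have hz := zip_tail_concat ((p₁, q₁) :: rest) (List.cons_ne_nil _ _) a
    simp only [List.cons_append, List.tail_cons] at hz
    rw [hz, List.foldl_append]
    simp only [← List.cons_append, List.getLast_concat]
    cases ε' <;> simp

section FockLemmas
variable {M R : Type*} [Monoid M] [MulZeroClass R]

lemma fockLam_zero (q : M) (ξ : R) : fockLam q ξ (0 : M → R) = 0 := by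
  funext s
  show (if h : ∃ u : M, q * u = s then ξ * (0 : M → R) h.choose else 0) = 0
  split <;> simp

lemma fockLamStar_zero [Star R] (p : M) (ξ : R) : fockLamStar p ξ (0 : M → R) = 0 := by
  funext s; show star ξ * (0 : M → R) (p * s) = 0; simp

lemma fockLam_single (hc : ∀ a b c : M, a * b = a * c → b = c)
    (q : M) (ξ : R) (r : M) (η : R) :
    fockLam q ξ (fockSingle r η) = fockSingle (q * r) (ξ * η) := by
  funext s
  show (if h : ∃ u : M, q * u = s then ξ * fockSingle r η h.choose else 0)
    = fockSingle (q * r) (ξ * η) s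
  unfold fockSingle
  by_cases h : ∃ u : M, q * u = s
  · rw [dif_pos h]
    by_cases hs : s = q * r
    · have : h.choose = r := hc q _ _ (h.choose_spec.trans hs)
      rw [if_pos this, if_pos hs]
    · have : h.choose ≠ r := fun he => hs (h.choose_spec.symm.trans (by rw [he]))
      rw [if_neg this, if_neg hs, mul_zero]
  · rw [dif_neg h, if_neg fun hs => h ⟨r, hs.symm⟩]

lemma fockLamStar_single [Star R] (hc : ∀ a b c : M, a * b = a * c → b = c)
    (p : M) (ξ : R) (r : M) (η : R) (u : M) (hu : p * u = r) :
    fockLamStar p ξ (fockSingle r η) = fockSingle u (star ξ * η) := by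
  funext s
  show star ξ * fockSingle r η (p * s) = fockSingle u (star ξ * η) s
  unfold fockSingle
  by_cases hs : s = u
  · rw [if_pos (by rw [hs, hu]), if_pos hs]
  · rw [if_neg (fun he => hs (hc p _ _ (he.trans hu.symm))), if_neg hs, mul_zero]

lemma fockLamStar_single_not [Star R]
    (p : M) (ξ : R) (r : M) (η : R) (hu : ∀ u : M, p * u ≠ r) :
    fockLamStar p ξ (fockSingle r η) = 0 := by
  funext s
  show star ξ * fockSingle r η (p * s) = 0
  unfold fockSingle
  rw [if_neg (hu s), mul_zero]

end FockLemmas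

lemma End_mul_apply {β : Type*} (A B : Function.End β) (v : β) : (A * B) v = A (B v) := rfl

lemma prod_end_apply_zero {β : Type*} [Zero β] (l : List (Function.End β))
    (h : ∀ f ∈ l, f 0 = 0) : l.prod 0 = 0 := by
  induction l with
  | nil => rfl
  | cons f l ih =>
    rw [List.prod_cons]
    show f (l.prod 0) = 0
    rw [ih fun g hg => h g (List.mem_cons_of_mem _ hg)]
    exact h f List.mem_cons_self

lemma genProd_apply_zero {α β : Type*} [Zero β] (ε ε' : Bool) (F₁ F₂ : α → Function.End β)
    (h₁ : ∀ a, F₁ a 0 = 0) (h₂ : ∀ a, F₂ a 0 = 0) (E : List α) :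
    genProd ε ε' F₁ F₂ E 0 = 0 := by
  apply prod_end_apply_zero
  intro f hf
  obtain ⟨ie, -, rfl⟩ := List.mem_map.mp hf
  show (if ie.1 = 0 ∧ ε = false then 1 else F₁ ie.2)
      ((if ie.1 = E.length - 1 ∧ ε' = false then 1 else F₂ ie.2) 0) = 0
  have k2 : (if ie.1 = E.length - 1 ∧ ε' = false then 1 else F₂ ie.2) 0 = 0 := by
    split
    · rfl
    · exact h₂ _
  rw [k2]
  split
  · rfl
  · exact h₁ _

set_option maxHeartbeats 2000000 in
/-- The word `(λ_{p₁}(ξ_{p₁})*)^{ε} λ_{q₁}(ξ_{q₁}) ⋯ λ_{pₙ}(ξ_{pₙ})* λ_{qₙ}(ξ_{qₙ})^{ε'}`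
of Fock creation operators applied to `ξ_r ∈ X_r` gives
`(ξ_{p₁}*)^{ε} ξ_{q₁} ⋯ ξ_{pₙ}* ξ_{qₙ}^{ε'} ξ_r` in the component
`p₁^{-ε} q₁ ⋯ pₙ⁻¹ qₙ^{ε'} r` if `r ∈ qₙ^{-ε'} pₙ ⋯ q₁⁻¹ p₁^{ε} P`, and `0` otherwise. -/
theorem stmt14 {G : Type*} [Group G] (P : Submonoid G)
    {H : Type*} [NormedAddCommGroup H] [InnerProductSpace ℂ H] [CompleteSpace H]
    (X : ↥P → Set (H →L[ℂ] H))
    (hXclosed : ∀ p, IsClosed (X p))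
    (hXestar : ∀ ξ ∈ X 1, star ξ ∈ X 1)
    (hXmul : ∀ (p q : ↥P) (ξ η : H →L[ℂ] H), ξ ∈ X p → η ∈ X q → ξ * η ∈ X (p * q))
    (hXstar : ∀ (p q : ↥P) (ξ ζ : H →L[ℂ] H), ξ ∈ X p → ζ ∈ X (p * q) →
      star ξ * ζ ∈ X q)
    (ε ε' : Bool)
    (E : List (↥P × (H →L[ℂ] H) × ↥P × (H →L[ℂ] H)))
    (hE : ∀ e ∈ E, e.2.1 ∈ X e.1 ∧ e.2.2.2 ∈ X e.2.2.1)
    (r : ↥P) (ξr : H →L[ℂ] H) (hξr : ξr ∈ X r) :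
    (r ∈ psWord ε ε' (E.map fun e => (e.1, e.2.2.1)) Set.univ →
      ∃ h : genProd ε ε' (fun e => ((e.1 : G))⁻¹) (fun e => ((e.2.2.1 : ↥P) : G)) E
          * (r : G) ∈ P,
        genProd ε ε' (fun e => fockLamStar e.1 e.2.1) (fun e => fockLam e.2.2.1 e.2.2.2) E
            (fockSingle r ξr)
          = fockSingle
              (⟨genProd ε ε' (fun e => ((e.1 : G))⁻¹) (fun e => ((e.2.2.1 : ↥P) : G)) E
                  * (r : G), h⟩ : ↥P)
              (genProd ε ε' (fun e => star e.2.1) (fun e => e.2.2.2) E * ξr)) ∧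
    (r ∉ psWord ε ε' (E.map fun e => (e.1, e.2.2.1)) Set.univ →
      genProd ε ε' (fun e => fockLamStar e.1 e.2.1) (fun e => fockLam e.2.2.1 e.2.2.2) E
          (fockSingle r ξr)
        = 0) := by
  have hc : ∀ a b c : ↥P, a * b = a * c → b = c := by
    intro a b c h
    ext
    exact mul_left_cancel (congrArg Subtype.val h : (a : G) * b = (a : G) * c)
  induction E using List.reverseRecOn generalizing ε' r ξr with
  | nil =>
    simp only [List.map_nil, genProd_nil]
    constructor
    · intro _
      have h1 : ((1 : G) * (r : G)) ∈ P := by simpa using r.2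
      refine ⟨h1, ?_⟩
      have hr : (⟨(1 : G) * (r : G), h1⟩ : ↥P) = r := Subtype.ext (one_mul _)
      rw [hr, one_mul]
      rfl
    · intro hmem
      exact absurd (Set.mem_univ r) hmem
  | append_singleton E'' e ih =>
    obtain ⟨p, ξp, q, ξq⟩ := e
    have hp : ξp ∈ X p := (hE (p, ξp, q, ξq) (by simp)).1
    have hq : ξq ∈ X q := (hE (p, ξp, q, ξq) (by simp)).2
    have hE'' : ∀ x ∈ E'', x.2.1 ∈ X x.1 ∧ x.2.2.2 ∈ X x.2.2.1 := fun x hx => hE x (by simp [hx])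
    by_cases hsp : E'' = [] ∧ ε = false
    · -- singleton with ε = false
      obtain ⟨rfl, rfl⟩ := hsp
      simp only [List.nil_append, List.map_cons, List.map_nil, genProd_singleton,
        psWord_singleton, if_neg Bool.false_ne_true, one_mul]
      cases ε'
      · simp only [if_neg Bool.false_ne_true, mul_one, id]
        constructor
        · intro _
          have h1 : ((1 : G) * (r : G)) ∈ P := by simpa using r.2
          refine ⟨h1, ?_⟩
          have hr : (⟨(1 : G) * (r : G), h1⟩ : ↥P) = r := Subtype.ext (one_mul _)
          rw [hr, one_mul]
          rfl
        · intro hmem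
          exact absurd (Set.mem_univ r) hmem
      · simp only [if_true]
        constructor
        · intro _
          have h1 : ((q : G) * (r : G)) ∈ P := by
            simpa using (q * r).2
          refine ⟨h1, ?_⟩
          have hr : (⟨(q : G) * (r : G), h1⟩ : ↥P) = q * r := Subtype.ext rfl
          rw [hr]
          exact fockLam_single hc q ξq r ξr
        · intro hmem
          exact absurd (Set.mem_univ r) hmem
    · -- main concatenation case
      have hcase : E'' ≠ [] ∨ ε = true := by
        rcases Classical.em (E'' = []) with h | h
        · right
          rcases Bool.eq_false_or_eq_true ε with h' | h'
          · exact h'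
          · exact absurd ⟨h, h'⟩ hsp
        · exact Or.inl h
      have hmap : (E''.map fun e => (e.1, e.2.2.1)) ≠ [] ∨ ε = true := by
        rcases hcase with h | h
        · exact Or.inl (by simpa using h)
        · exact Or.inr h
      simp only [List.map_append, List.map_cons, List.map_nil]
      rw [psWord_concat ε ε' _ _ _ hmap,
        genProd_concat ε ε' (fun e => fockLamStar e.1 e.2.1)
          (fun e => fockLam e.2.2.1 e.2.2.2) E'' (p, ξp, q, ξq) hcase,
        genProd_concat ε ε' (fun e => ((e.1 : G))⁻¹) (fun e => ((e.2.2.1 : ↥P) : G)) E''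
          (p, ξp, q, ξq) hcase,
        genProd_concat ε ε' (fun e => star e.2.1) (fun e => e.2.2.2) E'' (p, ξp, q, ξq) hcase]
      simp only
      have hv1 : (if ε' then fockLam q ξq else (1 : Function.End (↥P → (H →L[ℂ] H))))
          (fockSingle r ξr)
          = fockSingle (if ε' then q * r else r) (if ε' then ξq * ξr else ξr) := by
        cases ε'
        · simp only [if_neg Bool.false_ne_true]
          rfl
        · simp only [if_true]
          exact fockLam_single hc q ξq r ξr
      have hmem_iff : (r ∈ (if ε' then (((q : ↥P) * ·) ⁻¹' ·) else id)
            ((p * ·) '' psWord ε true (E''.map fun e => (e.1, e.2.2.1)) Set.univ)) ↔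
          (if ε' then q * r else r) ∈
            (p * ·) '' psWord ε true (E''.map fun e => (e.1, e.2.2.1)) Set.univ := by
        cases ε'
        · simp only [if_neg Bool.false_ne_true, id]
        · simp only [if_true]
          exact Iff.rfl
      by_cases hdiv : ∃ u : ↥P, p * u = (if ε' then q * r else r)
      · obtain ⟨u, hu⟩ := hdiv
        have hη₁X : (if ε' then ξq * ξr else ξr) ∈ X (if ε' then q * r else r) := by
          cases ε'
          · simpa using hξr
          · simpa using hXmul q r ξq ξr hq hξr
        have hη₂X : star ξp * (if ε' then ξq * ξr else ξr) ∈ X u :=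
          hXstar p u ξp _ hp (by rwa [hu])
        have IH := ih true hE'' u (star ξp * (if ε' then ξq * ξr else ξr)) hη₂X
        have hu' : (p : G) * (u : G) = (if ε' then ((q : ↥P) : G) else 1) * (r : G) := by
          have h0 := congrArg (Subtype.val) hu
          cases ε' <;> simpa using h0
        have hkey : ((p : G)⁻¹ * (if ε' then ((q : ↥P) : G) else 1)) * (r : G) = (u : G) := by
          rw [mul_assoc, ← hu', inv_mul_cancel_left]
        constructor
        · intro hmem
          have humem : u ∈ psWord ε true (E''.map fun e => (e.1, e.2.2.1)) Set.univ := by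
            obtain ⟨x, hx, hpx⟩ := hmem_iff.mp hmem
            have hxu : x = u := hc p x u (hpx.trans hu.symm)
            exact hxu ▸ hx
          obtain ⟨h'', heq⟩ := IH.1 humem
          have hcoordv : (genProd ε true (fun e => ((e.1 : G))⁻¹)
                (fun e => ((e.2.2.1 : ↥P) : G)) E''
                * ((p : G)⁻¹ * (if ε' then ((q : ↥P) : G) else 1))) * (r : G)
              = genProd ε true (fun e => ((e.1 : G))⁻¹)
                  (fun e => ((e.2.2.1 : ↥P) : G)) E'' * (u : G) := by
            rw [mul_assoc, hkey]
          refine ⟨by rw [hcoordv]; exact h'', ?_⟩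
          rw [End_mul_apply, End_mul_apply, hv1, fockLamStar_single hc p ξp _ _ u hu, heq]
          have hcoef : genProd ε true (fun e => star e.2.1) (fun e => e.2.2.2) E''
                * (star ξp * (if ε' then ξq * ξr else ξr))
              = (genProd ε true (fun e => star e.2.1) (fun e => e.2.2.2) E''
                * (star ξp * (if ε' then ξq else 1))) * ξr := by
            rw [mul_assoc, mul_assoc]
            cases ε'
            · simp only [if_neg Bool.false_ne_true, one_mul]
            · simp only [if_true]
          exact congrArg₂ fockSingle (Subtype.ext hcoordv.symm) hcoef
        · intro hnm
          have hun : u ∉ psWord ε true (E''.map fun e => (e.1, e.2.2.1)) Set.univ := fun hx =>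
            hnm (hmem_iff.mpr ⟨u, hx, hu⟩)
          rw [End_mul_apply, End_mul_apply, hv1, fockLamStar_single hc p ξp _ _ u hu, IH.2 hun]
      · push_neg at hdiv
        have hnm : r ∉ (if ε' then (((q : ↥P) * ·) ⁻¹' ·) else id)
            ((p * ·) '' psWord ε true (E''.map fun e => (e.1, e.2.2.1)) Set.univ) := by
          intro hmem
          obtain ⟨x, hx, hpx⟩ := hmem_iff.mp hmem
          exact hdiv x hpx
        refine ⟨fun hmem => absurd hmem hnm, fun _ => ?_⟩
        rw [End_mul_apply]
        rw [End_mul_apply]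
        rw [hv1]
        rw [fockLamStar_single_not p ξp _ _ hdiv]
        apply genProd_apply_zero
        · intro a
          exact fockLamStar_zero a.1 a.2.1
        · intro a
          exact fockLam_zero a.2.2.1 a.2.2.2
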